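/- arXiv:1910.02465 — 7 statements merged into one kernel-verified Lean document; each statement's English description precedes it below -/
import Mathlib

section
/- Let F be a field of characteristic p > 0 and let g : {0,1}^n → {0,1} be a symmetric Boolean function whose period per(g) equals p^t for some integer t ≥ 0, with p^t ≤ n. Then there exist coefficients c_0, c_1, …, c_{p^t − 1} ∈ F such that for every x ∈ {0,1}^n, g(x) = Σ_{d=0}^{p^t − 1} c_d · e_d(x), where e_d denotes the elementary symmetric polynomial of degree d in x_1,…,x_n evaluated over F. In particular, pdeg^F_ε(g) ≤ p^t − 1 for every ε > 0. -/
noncomputable section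

open scoped BigOperators

/-- Embed a Boolean value into a field: `true ↦ 1`, `false ↦ 0`. -/
def bF (F : Type) [Field F] (b : Bool) : F := if b then 1 else 0

/-- A finitely supported probability distribution on polynomials in
`F[x_1,…,x_n]` (a probabilistic polynomial). -/
structure ProbPoly (F : Type) [Field F] (n : ℕ) where
  k : ℕ
  w : Fin k → ℝ
  w_nonneg : ∀ i, 0 ≤ w i
  w_sum : ∑ i, w i = 1
  poly : Fin k → MvPolynomial (Fin n) F

open Classical in
/-- The probability that the probabilistic polynomial `P` errs on input `a`
with respect to the Boolean function `f`. -/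
def errAt {F : Type} [Field F] {n : ℕ} (P : ProbPoly F n)
    (f : (Fin n → Bool) → Bool) (a : Fin n → Bool) : ℝ :=
  ∑ i, if MvPolynomial.eval (fun v => bF F (a v)) (P.poly i) = bF F (f a) then 0 else P.w i

/-- The ε-error probabilistic degree of a Boolean function over `F`: the least `d`
such that some probabilistic polynomial of degree at most `d` computes `f` with
error at most `ε` at each point. -/
def pdeg (F : Type) [Field F] {n : ℕ} (f : (Fin n → Bool) → Bool) (ε : ℝ) : ℕ :=
  sInf {d | ∃ P : ProbPoly F n, (∀ i, (P.poly i).totalDegree ≤ d) ∧ ∀ a, errAt P f a ≤ ε}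

/-- Hamming weight of a Boolean input. -/
def wt {n : ℕ} (a : Fin n → Bool) : ℕ := (Finset.univ.filter fun i => a i = true).card

/-- The period of a spectrum: the least `b ≥ 1` with `spec i = spec (i+b)`
whenever `i + b ≤ n`. -/
def period (n : ℕ) (spec : ℕ → Bool) : ℕ :=
  sInf {b | 1 ≤ b ∧ ∀ i, i + b ≤ n → spec i = spec (i + b)}

/-- `B(f)`: the least `k` such that the spectrum is constant on `[k, n-k]`. -/
def Bparam (n : ℕ) (spec : ℕ → Bool) : ℕ :=
  sInf {k | ∀ i j, k ≤ i → i + k ≤ n → k ≤ j → j + k ≤ n → spec i = spec j}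

def coeffs (F : Type) [Field F] (spec : ℕ → Bool) : ℕ → F
  | m => bF F (spec m) -
      ∑ d ∈ (Finset.range m).attach, coeffs F spec d.1 * (m.choose d.1 : F)
  decreasing_by exact Finset.mem_range.mp d.2

theorem choose_shift {F : Type} [Field F] {p : ℕ} [CharP F p] (hp : p.Prime)
    (t m d : ℕ) (hd : d < p ^ t) :
    (((m + p ^ t).choose d : ℕ) : F) = ((m.choose d : ℕ) : F) := by
  rw [Nat.add_choose_eq]
  push_cast
  rw [Finset.sum_eq_single (d, 0)]
  · simp
  · rintro ⟨i, j⟩ hij hne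
    have hj : j ≠ 0 := by
      rintro rfl
      exact hne (by simpa using Finset.HasAntidiagonal.mem_antidiagonal.mp hij)
    have hjlt : j ≠ p ^ t := by
      have := Finset.HasAntidiagonal.mem_antidiagonal.mp hij
      omega
    have : (p : F) ∣ (((p ^ t).choose j : ℕ) : F) := by
      obtain ⟨k, hk⟩ := hp.dvd_choose_pow hj hjlt
      exact ⟨(k : F), by rw [hk]; push_cast; ring⟩
    obtain ⟨k, hk⟩ := this
    simp [hk, CharP.cast_eq_zero F p]
  · intro h
    exact absurd (Finset.HasAntidiagonal.mem_antidiagonal.mpr (by simp)) h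

theorem coeffs_spec {F : Type} [Field F] (spec : ℕ → Bool) (m : ℕ) :
    ∑ d ∈ Finset.range (m + 1), coeffs F spec d * (m.choose d : F) = bF F (spec m) := by
  rw [Finset.sum_range_succ, coeffs]
  rw [← Finset.sum_attach (Finset.range m) (fun d => coeffs F spec d * (m.choose d : F))]
  simp

theorem coeffs_spec' {F : Type} [Field F] (spec : ℕ → Bool) (N m : ℕ) (hm : m < N) :
    ∑ d ∈ Finset.range N, coeffs F spec d * (m.choose d : F) = bF F (spec m) := by
  rw [← coeffs_spec spec m]
  rw [← Finset.sum_range_add_sum_Ico _ (Nat.succ_le_of_lt hm)]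
  rw [Finset.sum_Ico_eq_sum_range]
  rw [add_eq_left]
  refine Finset.sum_eq_zero fun x _ => ?_
  rw [Nat.choose_eq_zero_of_lt (by omega)]
  simp

theorem coeffs_periodic {F : Type} [Field F] {p : ℕ} [CharP F p] (hp : p.Prime)
    (n t : ℕ) (spec : ℕ → Bool)
    (hshift : ∀ i, i + p ^ t ≤ n → spec i = spec (i + p ^ t)) :
    ∀ m, m ≤ n →
      ∑ d ∈ Finset.range (p ^ t), coeffs F spec d * (m.choose d : F) = bF F (spec m) := by
  intro m
  induction m using Nat.strong_induction_on with
  | _ m ih =>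
    intro hm
    by_cases h : m < p ^ t
    · exact coeffs_spec' spec _ m h
    · push_neg at h
      have hpt : 1 ≤ p ^ t := Nat.one_le_pow _ _ hp.pos
      have hm' : m - p ^ t + p ^ t = m := Nat.sub_add_cancel h
      have heq : ∀ d ∈ Finset.range (p ^ t),
          coeffs F spec d * (m.choose d : F)
            = coeffs F spec d * ((m - p ^ t).choose d : F) := by
        intro d hd
        conv_lhs => rw [← hm']
        rw [choose_shift hp t _ d (Finset.mem_range.mp hd)]
      rw [Finset.sum_congr rfl heq, ih (m - p ^ t) (by omega) (by omega),
        hshift (m - p ^ t) (by omega), hm']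

theorem eval_esymm_bool {F : Type} [Field F] {n : ℕ} (a : Fin n → Bool) (d : ℕ) :
    MvPolynomial.eval (fun v => bF F (a v)) (MvPolynomial.esymm (Fin n) F d)
      = (((Finset.univ.filter fun i => a i = true).card.choose d : ℕ) : F) := by
  classical
  set T := Finset.univ.filter fun i => a i = true with hT
  rw [MvPolynomial.esymm, map_sum]
  have key : ∀ S ∈ Finset.powersetCard d (Finset.univ : Finset (Fin n)),
      MvPolynomial.eval (fun v => bF F (a v)) (∏ i ∈ S, MvPolynomial.X i)
        = if S ⊆ T then (1 : F) else 0 := by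
    intro S _
    rw [map_prod]
    simp only [MvPolynomial.eval_X]
    by_cases h : S ⊆ T
    · rw [if_pos h, Finset.prod_eq_one]
      intro i hi
      have := h hi
      rw [hT, Finset.mem_filter] at this
      simp [bF, this.2]
    · rw [if_neg h]
      obtain ⟨i, hiS, hiT⟩ := Finset.not_subset.mp h
      refine Finset.prod_eq_zero hiS ?_
      have : a i ≠ true := fun hai => hiT (by simp [hT, hai])
      simp [bF, this]
  rw [Finset.sum_congr rfl key]
  rw [← Finset.sum_filter]
  have : Finset.filter (· ⊆ T) (Finset.powersetCard d Finset.univ)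
      = Finset.powersetCard d T := by
    ext S
    simp only [Finset.mem_filter, Finset.mem_powersetCard]
    constructor
    · rintro ⟨⟨_, h2⟩, h3⟩; exact ⟨h3, h2⟩
    · rintro ⟨h1, h2⟩; exact ⟨⟨Finset.subset_univ _, h2⟩, h1⟩
  rw [this, Finset.sum_const, nsmul_eq_mul, mul_one, Finset.card_powersetCard]

theorem totalDegree_esymm_le {F : Type} [Field F] (n d : ℕ) :
    (MvPolynomial.esymm (Fin n) F d).totalDegree ≤ d := by
  rw [MvPolynomial.esymm]
  refine le_trans (MvPolynomial.totalDegree_finset_sum _ _) ?_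
  refine Finset.sup_le fun S hS => ?_
  refine le_trans (MvPolynomial.totalDegree_finset_prod _ _) ?_
  calc ∑ i ∈ S, (MvPolynomial.X i : MvPolynomial (Fin n) F).totalDegree
      ≤ ∑ _i ∈ S, 1 := Finset.sum_le_sum fun i _ => le_of_eq (MvPolynomial.totalDegree_X i)
    _ = S.card := by simp
    _ = d := (Finset.mem_powersetCard.mp hS).2

/-- over characteristic `p > 0`, a symmetric Boolean function of
period `p^t ≤ n` is an exact linear combination of the elementary symmetric
polynomials of degree `< p^t`; in particular its probabilistic degree is at
most `p^t - 1` for every error `ε > 0`. -/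
theorem stmt2 (F : Type) [Field F] (p : ℕ) [CharP F p] (hp : p.Prime)
    (n t : ℕ) (g : (Fin n → Bool) → Bool) (spec : ℕ → Bool)
    (hg : ∀ a, g a = spec (wt a))
    (hper : period n spec = p ^ t) (hle : p ^ t ≤ n) :
    (∃ c : ℕ → F, ∀ a : Fin n → Bool,
        bF F (g a) = ∑ d ∈ Finset.range (p ^ t), c d *
          MvPolynomial.eval (fun v => bF F (a v)) (MvPolynomial.esymm (Fin n) F d))
    ∧ ∀ ε : ℝ, 0 < ε → pdeg F g ε ≤ p ^ t - 1 := by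
  classical
  have hpt1 : 1 ≤ p ^ t := Nat.one_le_pow _ _ hp.pos
  have hne : {b | 1 ≤ b ∧ ∀ i, i + b ≤ n → spec i = spec (i + b)}.Nonempty := by
    by_contra h
    rw [Set.not_nonempty_iff_eq_empty] at h
    rw [period, h, Nat.sInf_empty] at hper
    omega
  have hmem := Nat.sInf_mem hne
  rw [show sInf {b | 1 ≤ b ∧ ∀ i, i + b ≤ n → spec i = spec (i + b)} = period n spec from rfl,
    hper] at hmem
  have hshift := hmem.2
  have hwt : ∀ a : Fin n → Bool, wt a ≤ n := by
    intro a
    calc wt a ≤ (Finset.univ : Finset (Fin n)).card := Finset.card_filter_le _ _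
      _ = n := by simp
  have main : ∀ a : Fin n → Bool,
      bF F (g a) = ∑ d ∈ Finset.range (p ^ t), coeffs F spec d *
        MvPolynomial.eval (fun v => bF F (a v)) (MvPolynomial.esymm (Fin n) F d) := by
    intro a
    have : ∀ d ∈ Finset.range (p ^ t),
        coeffs F spec d * MvPolynomial.eval (fun v => bF F (a v))
          (MvPolynomial.esymm (Fin n) F d)
          = coeffs F spec d * ((wt a).choose d : F) := by
      intro d _
      rw [eval_esymm_bool]
      rfl
    rw [Finset.sum_congr rfl this,
      coeffs_periodic hp n t spec hshift (wt a) (hwt a), hg]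
  refine ⟨⟨coeffs F spec, main⟩, ?_⟩
  intro ε hε
  set Q : MvPolynomial (Fin n) F :=
    ∑ d ∈ Finset.range (p ^ t), MvPolynomial.C (coeffs F spec d) * MvPolynomial.esymm (Fin n) F d
    with hQ
  have hevalQ : ∀ a : Fin n → Bool,
      MvPolynomial.eval (fun v => bF F (a v)) Q = bF F (g a) := by
    intro a
    rw [hQ, map_sum, main a]
    refine Finset.sum_congr rfl fun d _ => ?_
    rw [map_mul, MvPolynomial.eval_C]
  have hdegQ : Q.totalDegree ≤ p ^ t - 1 := by
    rw [hQ]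
    refine le_trans (MvPolynomial.totalDegree_finset_sum _ _) ?_
    refine Finset.sup_le fun d hd => ?_
    refine le_trans (MvPolynomial.totalDegree_mul _ _) ?_
    have h1 : (MvPolynomial.C (coeffs F spec d) :
        MvPolynomial (Fin n) F).totalDegree = 0 := MvPolynomial.totalDegree_C _
    have h2 := totalDegree_esymm_le (F := F) n d
    have := Finset.mem_range.mp hd
    omega
  refine Nat.sInf_le ?_
  refine ⟨⟨1, fun _ => 1, fun _ => zero_le_one, by simp, fun _ => Q⟩, fun _ => hdegQ, ?_⟩
  intro a
  have : errAt ⟨1, fun _ => 1, fun _ => zero_le_one, by simp, fun _ => Q⟩ g a = 0 := by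
    rw [errAt]
    refine Finset.sum_eq_zero fun i _ => ?_
    rw [if_pos (hevalQ a)]
  rw [this]
  exact le_of_lt hε
end
end

section
/- Let F be a field of positive characteristic p. For every n ≥ 1 and every ε ∈ (0,1), pdeg^F_ε(OR_n) ≤ p·⌈log(1/ε)⌉ and pdeg^F_ε(AND_n) ≤ p·⌈log(1/ε)⌉. Moreover, for OR_n the probabilistic polynomial can be taken one-sided: on the all-zeros input it outputs 0 with probability 1. -/
noncomputable section

open scoped BigOperators

namespace Stmt5Aux

open MvPolynomial

variable {F : Type} [Field F] {p n t : ℕ}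

/-- The canonical ring hom from the prime field. -/
def phi (F : Type) [Field F] (p : ℕ) [CharP F p] : ZMod p →+* F :=
  ZMod.castHom dvd_rfl F

/-- The product-of-trials polynomial. -/
def tup (F : Type) [Field F] (p : ℕ) [CharP F p] {n t : ℕ}
    (g : Fin n → MvPolynomial (Fin n) F) (c : Fin t → Fin n → ZMod p) :
    MvPolynomial (Fin n) F :=
  ∏ j, (1 - (∑ i, MvPolynomial.C (phi F p (c j i)) * g i) ^ (p - 1))

open Classical in
lemma eval_tup [CharP F p] (hp : p.Prime) (g : Fin n → MvPolynomial (Fin n) F)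
    (a b : Fin n → Bool)
    (hg : ∀ i, MvPolynomial.eval (fun v => bF F (a v)) (g i) = bF F (b i))
    (c : Fin t → Fin n → ZMod p) :
    MvPolynomial.eval (fun v => bF F (a v)) (tup F p g c)
      = if (∀ j, ∑ i ∈ Finset.univ.filter (fun i => b i = true), c j i = 0)
        then 1 else 0 := by
  classical
  haveI : Fact p.Prime := ⟨hp⟩
  have hlin : ∀ j, MvPolynomial.eval (fun v => bF F (a v))
      ((∑ i, MvPolynomial.C (phi F p (c j i)) * g i) ^ (p - 1))
      = if (∑ i ∈ Finset.univ.filter (fun i => b i = true), c j i) = 0 then (0:F) else 1 := by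
    intro j
    have h1 : MvPolynomial.eval (fun v => bF F (a v))
        (∑ i, MvPolynomial.C (phi F p (c j i)) * g i)
        = phi F p (∑ i ∈ Finset.univ.filter (fun i => b i = true), c j i) := by
      rw [map_sum, map_sum, Finset.sum_filter]
      apply Finset.sum_congr rfl
      intro i _
      rw [map_mul, MvPolynomial.eval_C, hg]
      cases hb : b i <;> simp [bF]
    rw [map_pow, h1, ← map_pow]
    by_cases hS : (∑ i ∈ Finset.univ.filter (fun i => b i = true), c j i) = 0
    · rw [if_pos hS, hS, zero_pow (Nat.sub_ne_zero_of_lt hp.one_lt), map_zero]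
    · rw [if_neg hS, ZMod.pow_card_sub_one_eq_one hS, map_one]
  unfold tup
  rw [map_prod]
  have h2 : ∀ j : Fin t, MvPolynomial.eval (fun v => bF F (a v))
      (1 - (∑ i, MvPolynomial.C (phi F p (c j i)) * g i) ^ (p - 1))
      = if (∑ i ∈ Finset.univ.filter (fun i => b i = true), c j i) = 0 then (1:F) else 0 := by
    intro j
    rw [map_sub, map_one, hlin]
    by_cases hS : (∑ i ∈ Finset.univ.filter (fun i => b i = true), c j i) = 0 <;>
      simp [hS]
  rw [Finset.prod_congr rfl (fun j _ => h2 j), Finset.prod_boole]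
  simp

lemma count_single [NeZero p] (hp : p.Prime) {s : Finset (Fin n)} (hs : s.Nonempty) :
    (Finset.univ.filter (fun d : Fin n → ZMod p => ∑ i ∈ s, d i = 0)).card * p
      = p ^ n := by
  classical
  haveI : Fact p.Prime := ⟨hp⟩
  obtain ⟨i0, hi0⟩ := hs
  have hcard : Fintype.card (Fin n → ZMod p) = p ^ n := by
    rw [Fintype.card_fun, ZMod.card, Fintype.card_fin]
  have hfib : ∀ v : ZMod p,
      (Finset.univ.filter (fun d : Fin n → ZMod p => ∑ i ∈ s, d i = v)).card
        = (Finset.univ.filter (fun d : Fin n → ZMod p => ∑ i ∈ s, d i = 0)).card := by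
    intro v
    refine Finset.card_bij' (fun d _ => d - Pi.single i0 v) (fun d _ => d + Pi.single i0 v)
      ?_ ?_ ?_ ?_
    · intro d hd
      simp only [Finset.mem_filter, Finset.mem_univ, true_and] at hd ⊢
      simp [Finset.sum_sub_distrib, Finset.sum_pi_single', hd, hi0]
    · intro d hd
      simp only [Finset.mem_filter, Finset.mem_univ, true_and] at hd ⊢
      simp [Finset.sum_add_distrib, Finset.sum_pi_single', hd, hi0]
    · intro d _; simp
    · intro d _; simp
  have hsum := Finset.card_eq_sum_card_fiberwise
    (f := fun d : Fin n → ZMod p => ∑ i ∈ s, d i) (s := Finset.univ) (t := Finset.univ)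
    (fun x _ => Finset.mem_univ _)
  rw [Finset.card_univ, hcard] at hsum
  rw [Finset.sum_congr rfl (fun v _ => hfib v), Finset.sum_const, Finset.card_univ,
    ZMod.card, smul_eq_mul] at hsum
  rw [mul_comm]
  exact hsum.symm

lemma count_tuple [NeZero p] {s : Finset (Fin n)} :
    (Finset.univ.filter (fun c : Fin t → Fin n → ZMod p => ∀ j, ∑ i ∈ s, c j i = 0)).card
      = (Finset.univ.filter (fun d : Fin n → ZMod p => ∑ i ∈ s, d i = 0)).card ^ t := by
  classical
  rw [← Fintype.card_subtype, ← Fintype.card_subtype]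
  have e : {c : Fin t → Fin n → ZMod p // ∀ j, ∑ i ∈ s, c j i = 0}
      ≃ (∀ _j : Fin t, {d : Fin n → ZMod p // ∑ i ∈ s, d i = 0}) :=
    Equiv.subtypePiEquivPi (α := Fin t) (β := fun _ => Fin n → ZMod p)
      (p := fun _ d => ∑ i ∈ s, d i = 0)
  rw [Fintype.card_congr e]
  rw [Fintype.card_pi, Finset.prod_const, Finset.card_univ, Fintype.card_fin]

/-- The uniform probabilistic polynomial built from a family of polynomials. -/
def mkP (F : Type) [Field F] (p n t : ℕ) [CharP F p] [NeZero p]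
    (pol : (Fin t → Fin n → ZMod p) → MvPolynomial (Fin n) F) : ProbPoly F n where
  k := Fintype.card (Fin t → Fin n → ZMod p)
  w := fun _ => (Fintype.card (Fin t → Fin n → ZMod p) : ℝ)⁻¹
  w_nonneg := fun _ => by positivity
  w_sum := by
    rw [Finset.sum_const, Finset.card_univ, Fintype.card_fin, nsmul_eq_mul]
    exact mul_inv_cancel₀ (Nat.cast_ne_zero.mpr Fintype.card_ne_zero)
  poly := fun i => pol ((Fintype.equivFin _).symm i)

open Classical in
lemma errAt_mkP [CharP F p] [NeZero p]
    (pol : (Fin t → Fin n → ZMod p) → MvPolynomial (Fin n) F)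
    (f : (Fin n → Bool) → Bool) (a : Fin n → Bool) :
    errAt (mkP F p n t pol) f a
      = ∑ c : Fin t → Fin n → ZMod p,
          if MvPolynomial.eval (fun v => bF F (a v)) (pol c) = bF F (f a) then 0
          else (Fintype.card (Fin t → Fin n → ZMod p) : ℝ)⁻¹ := by
  unfold errAt mkP
  exact Fintype.sum_equiv (Fintype.equivFin _).symm _ _ (fun i => rfl)

lemma errAt_zero [CharP F p] [NeZero p]
    (pol : (Fin t → Fin n → ZMod p) → MvPolynomial (Fin n) F)
    (f : (Fin n → Bool) → Bool) (a : Fin n → Bool)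
    (hc : ∀ c, MvPolynomial.eval (fun v => bF F (a v)) (pol c) = bF F (f a)) :
    errAt (mkP F p n t pol) f a = 0 := by
  unfold errAt
  exact Finset.sum_eq_zero (fun i _ => if_pos (hc _))

lemma errAt_bound [CharP F p] [NeZero p] (hp : p.Prime)
    (pol : (Fin t → Fin n → ZMod p) → MvPolynomial (Fin n) F)
    (f : (Fin n → Bool) → Bool) (a : Fin n → Bool)
    {s : Finset (Fin n)} (hs : s.Nonempty)
    (hw : ∀ c : Fin t → Fin n → ZMod p,
      MvPolynomial.eval (fun v => bF F (a v)) (pol c) ≠ bF F (f a) →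
        ∀ j, ∑ i ∈ s, c j i = 0) :
    errAt (mkP F p n t pol) f a ≤ ((p:ℝ) ^ t)⁻¹ := by
  classical
  rw [errAt_mkP]
  set K : ℝ := (Fintype.card (Fin t → Fin n → ZMod p) : ℝ) with hK
  have hK0 : 0 < K := by
    rw [hK]
    exact_mod_cast Fintype.card_pos
  have step1 : (∑ c : Fin t → Fin n → ZMod p,
      if MvPolynomial.eval (fun v => bF F (a v)) (pol c) = bF F (f a) then 0 else K⁻¹)
      ≤ ∑ c : Fin t → Fin n → ZMod p,
          (if (∀ j, ∑ i ∈ s, c j i = 0) then K⁻¹ else 0) := by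
    apply Finset.sum_le_sum
    intro c _
    by_cases hgood : MvPolynomial.eval (fun v => bF F (a v)) (pol c) = bF F (f a)
    · rw [if_pos hgood]
      positivity
    · rw [if_neg hgood, if_pos (hw c hgood)]
  refine step1.trans ?_
  have step2 : (∑ c : Fin t → Fin n → ZMod p,
      (if (∀ j, ∑ i ∈ s, c j i = 0) then K⁻¹ else 0))
      = ((Finset.univ.filter
          (fun c : Fin t → Fin n → ZMod p => ∀ j, ∑ i ∈ s, c j i = 0)).card : ℝ) * K⁻¹ := by
    rw [← Finset.sum_filter, Finset.sum_const, nsmul_eq_mul]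
  rw [step2]
  -- counting
  set N : ℕ := (Finset.univ.filter (fun d : Fin n → ZMod p => ∑ i ∈ s, d i = 0)).card with hN
  have hNp : N * p = p ^ n := count_single hp hs
  have hN0 : 0 < N := by
    rcases Nat.eq_zero_or_pos N with h | h
    · exfalso
      have := hNp
      rw [h, zero_mul] at this
      exact (pow_ne_zero n hp.ne_zero) this.symm
    · exact h
  have hM : (Finset.univ.filter
      (fun c : Fin t → Fin n → ZMod p => ∀ j, ∑ i ∈ s, c j i = 0)).card = N ^ t :=
    count_tuple
  have hKcard : K = (N : ℝ) ^ t * (p : ℝ) ^ t := by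
    rw [hK]
    have : Fintype.card (Fin t → Fin n → ZMod p) = (p ^ n) ^ t := by
      rw [Fintype.card_fun, Fintype.card_fun, ZMod.card, Fintype.card_fin, Fintype.card_fin]
    rw [this, ← hNp]
    push_cast
    ring
  rw [hM, hKcard]
  have hNt : (0:ℝ) < (N:ℝ) ^ t := by positivity
  have hpt : (0:ℝ) < (p:ℝ) ^ t := by
    have : (0:ℝ) < (p:ℝ) := by exact_mod_cast hp.pos
    positivity
  push_cast
  rw [mul_inv, ← mul_assoc, mul_inv_cancel₀ (ne_of_gt hNt), one_mul]

lemma deg_tup [CharP F p] (g : Fin n → MvPolynomial (Fin n) F)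
    (hg : ∀ i, (g i).totalDegree ≤ 1) (c : Fin t → Fin n → ZMod p) :
    (tup F p g c).totalDegree ≤ t * p := by
  unfold tup
  refine (MvPolynomial.totalDegree_finset_prod _ _).trans ?_
  have hfac : ∀ j : Fin t,
      (1 - (∑ i, MvPolynomial.C (phi F p (c j i)) * g i) ^ (p - 1)).totalDegree ≤ p := by
    intro j
    have hlin : (∑ i, MvPolynomial.C (phi F p (c j i)) * g i).totalDegree ≤ 1 := by
      refine (MvPolynomial.totalDegree_finset_sum _ _).trans ?_
      apply Finset.sup_le
      intro i _
      refine (MvPolynomial.totalDegree_mul _ _).trans ?_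
      rw [MvPolynomial.totalDegree_C, zero_add]
      exact hg i
    have hpow : ((∑ i, MvPolynomial.C (phi F p (c j i)) * g i) ^ (p - 1)).totalDegree
        ≤ p := by
      refine (MvPolynomial.totalDegree_pow _ _).trans ?_
      calc (p - 1) * (∑ i, MvPolynomial.C (phi F p (c j i)) * g i).totalDegree
          ≤ (p - 1) * 1 := Nat.mul_le_mul_left _ hlin
        _ ≤ p := by omega
    have : (1 - (∑ i, MvPolynomial.C (phi F p (c j i)) * g i) ^ (p - 1))
        = (-((∑ i, MvPolynomial.C (phi F p (c j i)) * g i) ^ (p - 1))) + 1 := by ring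
    rw [this]
    refine (MvPolynomial.totalDegree_add _ _).trans ?_
    rw [MvPolynomial.totalDegree_neg, MvPolynomial.totalDegree_one]
    simp [hpow]
  refine le_trans (Finset.sum_le_sum (g := fun _ : Fin t => p) (fun j _ => hfac j)) ?_
  rw [Finset.sum_const, Finset.card_univ, Fintype.card_fin, smul_eq_mul]

end Stmt5Aux

open Stmt5Aux MvPolynomial in
/-- Razborov's upper bound `p·⌈log(1/ε)⌉` over characteristic
`p > 0` for `OR_n` and `AND_n`, with a one-sided probabilistic polynomial for
`OR_n` (it outputs `0` on the all-zeros input with probability 1). -/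
theorem stmt5 (F : Type) [Field F] (p : ℕ) [CharP F p] (hp : p.Prime)
    (n : ℕ) (hn : 1 ≤ n) (ε : ℝ) (hε0 : 0 < ε) (hε1 : ε < 1) :
    ((pdeg F (fun a : Fin n → Bool => decide (1 ≤ wt a)) ε : ℝ)
        ≤ p * ⌈Real.logb 2 (1/ε)⌉ ∧
     (pdeg F (fun a : Fin n → Bool => decide (wt a = n)) ε : ℝ)
        ≤ p * ⌈Real.logb 2 (1/ε)⌉) ∧
    ∃ P : ProbPoly F n,
      (∀ i, ((P.poly i).totalDegree : ℝ) ≤ p * ⌈Real.logb 2 (1/ε)⌉) ∧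
      (∀ a, errAt P (fun a : Fin n → Bool => decide (1 ≤ wt a)) a ≤ ε) ∧
      errAt P (fun a : Fin n → Bool => decide (1 ≤ wt a)) (fun _ => false) = 0 := by
  classical
  haveI : Fact p.Prime := ⟨hp⟩
  haveI : NeZero p := ⟨hp.ne_zero⟩
  -- arithmetic setup
  set t : ℕ := (⌈Real.logb 2 (1/ε)⌉).toNat with htdef
  have hinv1 : (1:ℝ) < 1/ε := by rw [lt_div_iff₀ hε0]; linarith
  have hlogpos : 0 < Real.logb 2 (1/ε) := Real.logb_pos one_lt_two hinv1
  have hceilpos : 0 < ⌈Real.logb 2 (1/ε)⌉ := Int.ceil_pos.mpr hlogpos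
  have htR : (t : ℝ) = (⌈Real.logb 2 (1/ε)⌉ : ℝ) := by
    rw [htdef]
    exact_mod_cast Int.toNat_of_nonneg hceilpos.le
  have herr : ((p:ℝ) ^ t)⁻¹ ≤ ε := by
    have h2t : (1:ℝ)/ε ≤ (2:ℝ) ^ t := by
      have h1 : Real.logb 2 (1/ε) ≤ (t : ℝ) := by
        rw [htR]; exact Int.le_ceil _
      have h2 : (2:ℝ) ^ Real.logb 2 (1/ε) ≤ (2:ℝ) ^ (t:ℝ) :=
        Real.rpow_le_rpow_of_exponent_le one_le_two h1
      rwa [Real.rpow_logb (by norm_num) (by norm_num) (by positivity),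
        Real.rpow_natCast] at h2
    have hpt : (1:ℝ)/ε ≤ (p:ℝ) ^ t := by
      refine h2t.trans (pow_le_pow_left₀ (by norm_num) ?_ t)
      exact_mod_cast hp.two_le
    have hpos : (0:ℝ) < 1/ε := by positivity
    calc ((p:ℝ) ^ t)⁻¹ ≤ ((1:ℝ)/ε)⁻¹ := inv_anti₀ hpos hpt
      _ = ε := by rw [one_div, inv_inv]
  -- the polynomials
  set gOR : Fin n → MvPolynomial (Fin n) F := fun i => MvPolynomial.X i with hgORdef
  set gAND : Fin n → MvPolynomial (Fin n) F := fun i => 1 - MvPolynomial.X i with hgANDdef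
  have hgOR : ∀ (a : Fin n → Bool) (i : Fin n),
      MvPolynomial.eval (fun v => bF F (a v)) (gOR i) = bF F (a i) := by
    intro a i; rw [hgORdef]; simp
  have hgAND : ∀ (a : Fin n → Bool) (i : Fin n),
      MvPolynomial.eval (fun v => bF F (a v)) (gAND i) = bF F (!a i) := by
    intro a i
    rw [hgANDdef]
    simp only [map_sub, map_one, MvPolynomial.eval_X]
    cases h : a i <;> simp [bF]
  have hdegOR : ∀ i, (gOR i).totalDegree ≤ 1 := fun i => by
    rw [hgORdef]; exact le_of_eq (MvPolynomial.totalDegree_X i)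
  have hdegAND : ∀ i, (gAND i).totalDegree ≤ 1 := fun i => by
    rw [hgANDdef]
    have : (1 - MvPolynomial.X i : MvPolynomial (Fin n) F)
        = (-(MvPolynomial.X i)) + 1 := by ring
    simp only
    rw [this]
    refine (MvPolynomial.totalDegree_add _ _).trans ?_
    rw [MvPolynomial.totalDegree_neg, MvPolynomial.totalDegree_one,
      MvPolynomial.totalDegree_X]
    simp
  set polOR : (Fin t → Fin n → ZMod p) → MvPolynomial (Fin n) F :=
    fun c => 1 - tup F p gOR c with hpolORdef
  set polAND : (Fin t → Fin n → ZMod p) → MvPolynomial (Fin n) F :=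
    fun c => tup F p gAND c with hpolANDdef
  -- evaluation formulas
  have hevalOR : ∀ (a : Fin n → Bool) (c : Fin t → Fin n → ZMod p),
      MvPolynomial.eval (fun v => bF F (a v)) (polOR c)
        = 1 - (if (∀ j, ∑ i ∈ Finset.univ.filter (fun i => a i = true), c j i = 0)
            then (1:F) else 0) := by
    intro a c
    rw [hpolORdef]
    simp only
    rw [map_sub, map_one, eval_tup hp gOR a a (hgOR a) c]
  have hevalAND : ∀ (a : Fin n → Bool) (c : Fin t → Fin n → ZMod p),
      MvPolynomial.eval (fun v => bF F (a v)) (polAND c)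
        = (if (∀ j, ∑ i ∈ Finset.univ.filter (fun i => (!a i) = true), c j i = 0)
            then (1:F) else 0) := by
    intro a c
    rw [hpolANDdef]
    exact eval_tup hp gAND a (fun i => !a i) (hgAND a) c
  -- degree bounds
  have hdegPolOR : ∀ c, (polOR c).totalDegree ≤ p * t := by
    intro c
    rw [hpolORdef]
    simp only
    have : (1 - tup F p gOR c) = (-(tup F p gOR c)) + 1 := by ring
    rw [this]
    refine (MvPolynomial.totalDegree_add _ _).trans ?_
    rw [MvPolynomial.totalDegree_neg, MvPolynomial.totalDegree_one]
    have := deg_tup gOR hdegOR c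
    simp only [sup_le_iff]
    exact ⟨this.trans (by rw [mul_comm]), Nat.zero_le _⟩
  have hdegPolAND : ∀ c, (polAND c).totalDegree ≤ p * t := by
    intro c
    rw [hpolANDdef]
    exact (deg_tup gAND hdegAND c).trans (le_of_eq (mul_comm t p))
  have hcastdeg : ((p * t : ℕ) : ℝ) = p * ⌈Real.logb 2 (1/ε)⌉ := by
    push_cast
    rw [htR]
  -- error bounds for OR
  have herrOR : ∀ a, errAt (mkP F p n t polOR)
      (fun a : Fin n → Bool => decide (1 ≤ wt a)) a ≤ ε := by
    intro a
    by_cases hwt : 1 ≤ wt a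
    · have hs : (Finset.univ.filter (fun i => a i = true)).Nonempty := by
        rw [← Finset.card_pos]; exact hwt
      refine (errAt_bound hp polOR _ a hs ?_).trans herr
      intro c hbad j
      by_contra hcon
      apply hbad
      have hcond : ¬ (∀ j, ∑ i ∈ Finset.univ.filter (fun i => a i = true), c j i = 0) :=
        fun h => hcon (h j)
      rw [hevalOR a c, if_neg hcond]
      simp [bF, hwt]
    · have hzero : errAt (mkP F p n t polOR)
          (fun a : Fin n → Bool => decide (1 ≤ wt a)) a = 0 := by
        apply errAt_zero
        intro c
        have hwt0 : wt a = 0 := by omega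
        have hempty : Finset.univ.filter (fun i => a i = true) = ∅ := by
          rw [← Finset.card_eq_zero]
          exact hwt0
        rw [hevalOR a c]
        have : (∀ j, ∑ i ∈ Finset.univ.filter (fun i => a i = true), c j i = 0) := by
          intro j; rw [hempty]; simp
        rw [if_pos this]
        simp [bF, hwt]
      rw [hzero]
      exact hε0.le
  have herrORzero : errAt (mkP F p n t polOR)
      (fun a : Fin n → Bool => decide (1 ≤ wt a)) (fun _ => false) = 0 := by
    apply errAt_zero
    intro c
    have hempty : Finset.univ.filter (fun i => (fun _ : Fin n => false) i = true) = ∅ := by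
      simp
    rw [hevalOR (fun _ => false) c]
    have hcond : (∀ j, ∑ i ∈ Finset.univ.filter
        (fun i => (fun _ : Fin n => false) i = true), c j i = 0) := by
      intro j; rw [hempty]; simp
    rw [if_pos hcond]
    have hwt0 : ¬ (1 ≤ wt (fun _ : Fin n => false)) := by
      unfold wt; simp
    simp [bF, hwt0]
  -- error bounds for AND
  have herrAND : ∀ a, errAt (mkP F p n t polAND)
      (fun a : Fin n → Bool => decide (wt a = n)) a ≤ ε := by
    intro a
    by_cases hwt : wt a = n
    · have hall : ∀ i, a i = true := by
        intro i
        have huniv : Finset.univ.filter (fun i => a i = true) = Finset.univ := by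
          apply Finset.eq_univ_of_card
          exact hwt.trans (Fintype.card_fin n).symm
        have := Finset.mem_univ i
        rw [← huniv, Finset.mem_filter] at this
        exact this.2
      have hzero : errAt (mkP F p n t polAND)
          (fun a : Fin n → Bool => decide (wt a = n)) a = 0 := by
        apply errAt_zero
        intro c
        have hempty : Finset.univ.filter (fun i => (!a i) = true) = ∅ := by
          apply Finset.filter_eq_empty_iff.mpr
          intro i _
          simp [hall i]
        rw [hevalAND a c]
        have : (∀ j, ∑ i ∈ Finset.univ.filter (fun i => (!a i) = true), c j i = 0) := by
          intro j; rw [hempty]; simp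
        rw [if_pos this]
        simp [bF, hwt]
      rw [hzero]
      exact hε0.le
    · have hs : (Finset.univ.filter (fun i => (!a i) = true)).Nonempty := by
        rw [Finset.filter_nonempty_iff]
        by_contra hcon
        push_neg at hcon
        apply hwt
        have hall : ∀ i, a i = true := by
          intro i
          have := hcon i (Finset.mem_univ i)
          simpa using this
        unfold wt
        have : Finset.univ.filter (fun i : Fin n => a i = true) = Finset.univ := by
          apply Finset.filter_true_of_mem
          intro i _; exact hall i
        rw [this, Finset.card_univ, Fintype.card_fin]
      refine (errAt_bound hp polAND _ a hs ?_).trans herr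
      intro c hbad j
      by_contra hcon
      apply hbad
      have hcond : ¬ (∀ j, ∑ i ∈ Finset.univ.filter (fun i => (!a i) = true), c j i = 0) :=
        fun h => hcon (h j)
      rw [hevalAND a c, if_neg hcond]
      simp [bF, hwt]
  -- assemble
  have hORmem : pdeg F (fun a : Fin n → Bool => decide (1 ≤ wt a)) ε ≤ p * t := by
    apply Nat.sInf_le
    exact ⟨mkP F p n t polOR, fun i => hdegPolOR _, herrOR⟩
  have hANDmem : pdeg F (fun a : Fin n → Bool => decide (wt a = n)) ε ≤ p * t := by
    apply Nat.sInf_le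
    exact ⟨mkP F p n t polAND, fun i => hdegPolAND _, herrAND⟩
  refine ⟨⟨?_, ?_⟩, mkP F p n t polOR, ?_, herrOR, herrORzero⟩
  · calc (pdeg F (fun a : Fin n → Bool => decide (1 ≤ wt a)) ε : ℝ)
        ≤ ((p * t : ℕ) : ℝ) := by exact_mod_cast hORmem
      _ = p * ⌈Real.logb 2 (1/ε)⌉ := hcastdeg
  · calc (pdeg F (fun a : Fin n → Bool => decide (wt a = n)) ε : ℝ)
        ≤ ((p * t : ℕ) : ℝ) := by exact_mod_cast hANDmem
      _ = p * ⌈Real.logb 2 (1/ε)⌉ := hcastdeg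
  · intro i
    calc ((((mkP F p n t polOR).poly i).totalDegree : ℕ) : ℝ)
        ≤ ((p * t : ℕ) : ℝ) := by exact_mod_cast hdegPolOR _
      _ = p * ⌈Real.logb 2 (1/ε)⌉ := hcastdeg
end
end

section
/- Let g : {0,1}^n → {0,1} be a symmetric Boolean function with per(g) = b > 1. Then for all i, j ∈ {0, 1, …, n−b+1} with i ≢ j (mod b), the restriction of Spec g to the interval [i, i+b−1] differs from the restriction of Spec g to [j, j+b−1]; that is, there exists s ∈ {0,…,b−1} with Spec g(i+s) ≠ Spec g(j+s). -/
noncomputable section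

open scoped BigOperators

private lemma stmt11_aux (n : ℕ) (spec : ℕ → Bool) (b : ℕ)
    (hper : ∀ t, t + b ≤ n → spec t = spec (t + b))
    (hmin : ∀ g, 1 ≤ g → (∀ t, t + g ≤ n → spec t = spec (t + g)) → b ≤ g)
    (hb1 : 1 < b) (i j : ℕ) (hij : i ≤ j) (hi : i + b ≤ n + 1) (hj : j + b ≤ n + 1)
    (hne : i % b ≠ j % b) (hcon : ∀ s < b, spec (i + s) = spec (j + s)) : False := by
  have hb0 : 0 < b := by omega
  set d := j - i with hd
  have hjd : j = i + d := by omega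
  have hd0 : d % b ≠ 0 := by
    intro h
    obtain ⟨c, hc⟩ := Nat.dvd_iff_mod_eq_zero.mpr h
    apply hne
    rw [hjd, hc, mul_comm, Nat.add_mul_mod_self_right]
  set S : ℕ → Bool := fun t => spec (t % b) with hS
  have hSmod : ∀ t, S t = S (t % b) := by
    intro t
    simp only [hS, Nat.mod_mod_of_dvd t dvd_rfl]
  have hSspec : ∀ t, t ≤ n → S t = spec t := by
    intro t
    induction t using Nat.strong_induction_on with
    | _ t ih =>
      intro ht
      rcases lt_or_ge t b with h | h
      · simp [hS, Nat.mod_eq_of_lt h]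
      · have h3 : t - b + b = t := by omega
        have h2 := hper (t - b) (by omega)
        rw [h3] at h2
        have h4 : t % b = (t - b) % b := by
          conv_lhs => rw [← h3]
          rw [Nat.add_mod_right]
        have := ih (t - b) (by omega) (by omega)
        simp only [hS] at this ⊢
        rw [h4, this, h2]
  -- main shift step
  have hC : ∀ t, S t = S (t + d) := by
    intro t
    have hib : i % b < b := Nat.mod_lt _ hb0
    set s := (t % b + b - i % b) % b with hs
    have hsb : s < b := Nat.mod_lt _ hb0
    have hmeq : (i + s) % b = t % b := by
      have h1 : i % b + s ≡ i % b + (t % b + b - i % b) [MOD b] :=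
        Nat.ModEq.add_left _ (Nat.mod_modEq _ _)
      have h2 : i % b + (t % b + b - i % b) = t % b + b := by omega
      have h3 : (i + s) % b = (i % b + s) % b := by
        rw [Nat.add_mod, Nat.mod_eq_of_lt hsb]
      rw [h3, h1, h2, Nat.add_mod_right, Nat.mod_mod_of_dvd t dvd_rfl]
    have hin : i + s ≤ n := by omega
    have hjn : j + s ≤ n := by omega
    calc S t = S (i + s) := by rw [hSmod (i+s), hmeq, ← hSmod t]
      _ = spec (i + s) := hSspec _ hin
      _ = spec (j + s) := hcon s hsb
      _ = S (j + s) := (hSspec _ hjn).symm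
      _ = S (t + d) := by
          rw [hSmod (j+s), hSmod (t+d), hjd]
          congr 1
          have : (i + s + d) % b = (t + d) % b := by
            rw [Nat.add_mod (i+s), hmeq, ← Nat.add_mod]
          rw [show i + d + s = i + s + d by ring, this]
  have hCk : ∀ k t, S t = S (t + k * d) := by
    intro k
    induction k with
    | zero => simp
    | succ k ih =>
      intro t
      rw [ih t, hC (t + k * d)]
      congr 1
      ring
  -- pass to gcd
  set G := Nat.gcd d b with hG
  have hG1 : 1 ≤ G := Nat.gcd_pos_of_pos_right _ hb0
  have hGb : G ∣ b := Nat.gcd_dvd_right _ _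
  have hGlt : G < b := by
    rcases lt_or_eq_of_le (Nat.le_of_dvd hb0 hGb) with h | h
    · exact h
    · exfalso
      apply hd0
      have hbd : b ∣ d := h ▸ Nat.gcd_dvd_left d b
      exact Nat.dvd_iff_mod_eq_zero.mp hbd
  have hbez := Nat.gcd_eq_gcd_ab d b
  set u := Nat.gcdA d b with hu
  set v := Nat.gcdB d b with hv
  have hbZ : (0 : ℤ) < (b : ℤ) := by exact_mod_cast hb0
  set k := (u % (b : ℤ)).toNat with hk
  have hkZ : (k : ℤ) = u % (b : ℤ) := Int.toNat_of_nonneg (Int.emod_nonneg u (by omega))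
  have hmodeq : (k * d) % b = G % b := by
    have h1 : ((k * d : ℕ) : ℤ) % (b : ℤ) = ((G : ℕ) : ℤ) % (b : ℤ) := by
      push_cast
      rw [hkZ]
      have e1 : u % (b : ℤ) * d ≡ u * d [ZMOD (b : ℤ)] :=
        Int.ModEq.mul_right _ (Int.emod_emod_of_dvd u dvd_rfl)
      have e2 : u * (d : ℤ) ≡ G [ZMOD (b : ℤ)] := by
        rw [Int.modEq_iff_dvd]
        exact ⟨v, by linarith [hbez]⟩
      exact e1.trans e2
    exact_mod_cast h1
  have hCG : ∀ t, S t = S (t + G) := by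
    intro t
    rw [hCk k t, hSmod (t + k * d), hSmod (t + G)]
    congr 1
    rw [Nat.add_mod t (k*d), hmodeq, ← Nat.add_mod]
  have : b ≤ G := by
    apply hmin G hG1
    intro t ht
    rw [← hSspec t (by omega), hCG t, hSspec _ (by omega)]
  omega

/-- if `per(g) = b > 1`, then windows of length `b` of the
spectrum of `g` starting at positions incongruent mod `b` are distinct. -/
theorem stmt11 (n : ℕ) (g : (Fin n → Bool) → Bool) (spec : ℕ → Bool)
    (hg : ∀ a, g a = spec (wt a)) (b : ℕ) (hb : period n spec = b) (hb1 : 1 < b) :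
    ∀ i j, i + b ≤ n + 1 → j + b ≤ n + 1 → i % b ≠ j % b →
      ∃ s < b, spec (i + s) ≠ spec (j + s) := by
  have hset : b ∈ {b | 1 ≤ b ∧ ∀ i, i + b ≤ n → spec i = spec (i + b)} := by
    rw [← hb]
    exact Nat.sInf_mem ⟨n + 1, le_add_self, fun i h => by omega⟩
  have hper := hset.2
  have hmin : ∀ g, 1 ≤ g → (∀ t, t + g ≤ n → spec t = spec (t + g)) → b ≤ g := by
    intro g h1 h2
    rw [← hb]
    exact Nat.sInf_le ⟨h1, h2⟩
  intro i j hi hj hne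
  by_contra hcon
  push_neg at hcon
  rcases le_total i j with h | h
  · exact (stmt11_aux n spec b hper hmin hb1 i j h hi hj hne hcon).elim
  · exact (stmt11_aux n spec b hper hmin hb1 j i h hj hi (Ne.symm hne)
      (fun s hs => (hcon s hs).symm)).elim
end
end

section
/- For every symmetric Boolean function f : {0,1}^n → {0,1} and every pair of integers 0 ≤ a ≤ b ≤ n, there exists a symmetric multilinear polynomial Q ∈ ℤ[X_1,…,X_n] of total degree at most b−a such that for every x ∈ {0,1}^n with a ≤ |x| ≤ b, Q(x) = f(x) (identifying the Boolean values 0,1 with the integers 0,1). -/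
noncomputable section

open scoped BigOperators

open Finset MvPolynomial in
/-- Integer interpolation in the binomial basis. -/
lemma interp_aux (d : ℕ) : ∀ (a : ℕ) (g : ℕ → ℤ), ∃ m : ℕ → ℤ,
    ∀ w, a ≤ w → w ≤ a + d →
      (∑ j ∈ Finset.range (d+1), m j * (w.choose j : ℤ)) = g w := by
  induction d with
  | zero =>
    intro a g
    refine ⟨fun _ => g a, fun w hw hw' => ?_⟩
    have : w = a := le_antisymm (by simpa using hw') hw
    simp [this]
  | succ d ih =>
    intro a g
    obtain ⟨m', hm'⟩ := ih a (fun w => g (w+1) - g w)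
    set F : ℕ → ℤ := fun w => ∑ j ∈ Finset.range (d+1), m' j * (w.choose (j+1) : ℤ) with hF
    refine ⟨fun j => if j = 0 then g a - F a else m' (j-1), fun w hw hw' => ?_⟩
    have key : ∀ w, a ≤ w → w ≤ a + d + 1 →
        (g a - F a) + F w = g w := by
      intro w
      induction w with
      | zero =>
        intro hw _
        interval_cases a
        ring
      | succ w ihw =>
        intro hw hw'
        rcases Nat.lt_or_ge w a with h | h
        · have : a = w + 1 := le_antisymm hw h
          subst this; ring
        · have hstep : F (w+1) - F w = g (w+1) - g w := by
            have h1 : F (w+1) - F w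
                = ∑ j ∈ Finset.range (d+1), m' j * (w.choose j : ℤ) := by
              rw [hF]
              rw [← Finset.sum_sub_distrib]
              refine Finset.sum_congr rfl fun j _ => ?_
              rw [← mul_sub]
              congr 1
              rw [Nat.choose_succ_succ w j]
              push_cast
              ring
            rw [h1, hm' w h (by omega)]
          have := ihw h (by omega)
          linarith
    have expand : (∑ j ∈ Finset.range (d+2),
        (if j = 0 then g a - F a else m' (j-1)) * (w.choose j : ℤ))
        = (g a - F a) + F w := by
      rw [Finset.sum_range_succ']
      simp only [Nat.add_sub_cancel, if_neg (Nat.succ_ne_zero _)]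
      rw [hF]
      simp [add_comm]
    rw [show d + 1 + 1 = d + 2 from rfl, expand]
    exact key w hw (by omega)

open Finset MvPolynomial in
lemma eval_esymm_bool_s12 (n j : ℕ) (x : Fin n → Bool) :
    MvPolynomial.eval (fun v => if x v then (1:ℤ) else 0) (esymm (Fin n) ℤ j)
      = ((wt x).choose j : ℤ) := by
  classical
  set T : Finset (Fin n) := Finset.univ.filter fun i => x i = true with hT
  rw [esymm, map_sum]
  have hterm : ∀ t ∈ powersetCard j (univ : Finset (Fin n)),
      MvPolynomial.eval (fun v => if x v then (1:ℤ) else 0) (∏ i ∈ t, X i)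
        = if t ⊆ T then 1 else 0 := by
    intro t _
    rw [map_prod]
    simp only [eval_X]
    by_cases h : t ⊆ T
    · rw [if_pos h]
      apply Finset.prod_eq_one
      intro i hi
      have := h hi
      rw [hT, Finset.mem_filter] at this
      simp [this.2]
    · rw [if_neg h]
      obtain ⟨i, hi, hi'⟩ := Finset.not_subset.mp h
      apply Finset.prod_eq_zero hi
      rw [hT, Finset.mem_filter] at hi'
      simp only [Finset.mem_univ, true_and] at hi'
      simp [hi']
  rw [Finset.sum_congr rfl hterm, Finset.sum_boole]
  have : Finset.filter (· ⊆ T) (powersetCard j (univ : Finset (Fin n)))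
      = T.powersetCard j := by
    ext s
    simp [Finset.mem_powersetCard, and_comm]
  rw [this, Finset.card_powersetCard]
  rfl

open Finset MvPolynomial in
lemma wt_canonical (n w : ℕ) (hw : w ≤ n) :
    wt (fun i : Fin n => decide (i.val < w)) = w := by
  classical
  unfold wt
  have : (Finset.univ.filter fun i : Fin n => decide (i.val < w) = true)
      = Finset.univ.filter fun i : Fin n => i.val < w := by
    simp
  rw [this]
  have h2 : (Finset.univ.filter fun i : Fin n => i.val < w)
      = Finset.map (Fin.castLEEmb hw) Finset.univ := by
    ext i
    simp [Fin.lt_iff_val_lt_val, Fin.ext_iff, Fin.castLEEmb]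
    constructor
    · intro h; exact ⟨⟨i.val, h⟩, rfl⟩
    · rintro ⟨j, hj⟩; omega
  rw [h2]; simp

/-- for any symmetric Boolean function and any `0 ≤ a ≤ b ≤ n`,
there is a symmetric multilinear integer polynomial of total degree at most
`b - a` agreeing with `f` on all inputs of Hamming weight in `[a, b]`. -/
theorem stmt12 (n : ℕ) (f : (Fin n → Bool) → Bool)
    (hf : ∀ x y : Fin n → Bool, wt x = wt y → f x = f y)
    (a b : ℕ) (hab : a ≤ b) (hbn : b ≤ n) :
    ∃ Q : MvPolynomial (Fin n) ℤ,
      Q.totalDegree ≤ b - a ∧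
      (∀ j, Q.degreeOf j ≤ 1) ∧
      MvPolynomial.IsSymmetric Q ∧
      ∀ x : Fin n → Bool, a ≤ wt x → wt x ≤ b →
        MvPolynomial.eval (fun v => if x v then (1:ℤ) else 0) Q
          = if f x then 1 else 0 := by
  classical
  set d := b - a with hd
  set z : ℕ → (Fin n → Bool) := fun w => fun i => decide (i.val < w) with hz
  set g : ℕ → ℤ := fun w => if f (z w) then 1 else 0 with hg
  obtain ⟨m, hm⟩ := interp_aux d a g
  refine ⟨∑ j ∈ Finset.range (d+1), MvPolynomial.C (m j) * MvPolynomial.esymm (Fin n) ℤ j,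
    ?_, ?_, ?_, ?_⟩
  · refine MvPolynomial.totalDegree_finsetSum_le fun j hj => ?_
    refine le_trans (MvPolynomial.totalDegree_mul _ _) ?_
    rw [MvPolynomial.totalDegree_C, zero_add]
    have hjd : j ≤ d := by have := Finset.mem_range.mp hj; omega
    refine le_trans ?_ hjd
    unfold MvPolynomial.esymm
    refine MvPolynomial.totalDegree_finsetSum_le fun t ht => ?_
    refine le_trans (MvPolynomial.totalDegree_finset_prod _ _) ?_
    calc ∑ i ∈ t, (MvPolynomial.X i : MvPolynomial (Fin n) ℤ).totalDegree
        ≤ ∑ _i ∈ t, 1 := Finset.sum_le_sum fun i _ => le_of_eq (MvPolynomial.totalDegree_X i)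
      _ = t.card := by simp
      _ = j := (Finset.mem_powersetCard.mp ht).2
  · intro v
    refine le_trans (MvPolynomial.degreeOf_sum_le _ _ _) (Finset.sup_le fun j _ => ?_)
    refine le_trans (MvPolynomial.degreeOf_C_mul_le _ _ _) ?_
    unfold MvPolynomial.esymm
    refine le_trans (MvPolynomial.degreeOf_sum_le _ _ _) (Finset.sup_le fun t _ => ?_)
    refine le_trans (MvPolynomial.degreeOf_prod_le _ _ _) ?_
    calc ∑ i ∈ t, (MvPolynomial.X i : MvPolynomial (Fin n) ℤ).degreeOf v
        = ∑ i ∈ t, if v = i then 1 else 0 := by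
          refine Finset.sum_congr rfl fun i _ => ?_
          rw [MvPolynomial.degreeOf_X]
      _ ≤ 1 := by
          rw [Finset.sum_ite_eq]
          split <;> simp
  · exact (MvPolynomial.symmetricSubalgebra (Fin n) ℤ).sum_mem fun j _ =>
      ((MvPolynomial.IsSymmetric.C (m j)).mul (MvPolynomial.esymm_isSymmetric _ _ j))
  · intro x hax hxb
    have hwtn : wt x ≤ n := by
      unfold wt; exact le_trans (Finset.card_filter_le _ _) (by simp)
    rw [map_sum]
    have : ∀ j ∈ Finset.range (d+1),
        MvPolynomial.eval (fun v => if x v then (1:ℤ) else 0)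
          (MvPolynomial.C (m j) * MvPolynomial.esymm (Fin n) ℤ j)
        = m j * ((wt x).choose j : ℤ) := by
      intro j _
      rw [map_mul, MvPolynomial.eval_C, eval_esymm_bool_s12]
    rw [Finset.sum_congr rfl this, hm (wt x) hax (by omega)]
    have hz' : wt (z (wt x)) = wt x := wt_canonical n (wt x) hwtn
    have : f (z (wt x)) = f x := hf _ _ hz'
    rw [hg]
    simp only [this]
end
end

section
/- Let n ≥ 1 and let 𝓕 be a set of functions from {0,…,n−1} to {0,1} such that (a) for every f ∈ 𝓕 the function 1−f also belongs to 𝓕, and (b) for every pair i, j ∈ {0,…,n−1} with i ≠ j there exists f ∈ 𝓕 with f(i) = 1 and f(j) = 0. Then there exists a finite subset S ⊆ 𝓕 with |S| ≤ log n such that the pointwise product f_S = ∏_{f∈S} f (with the empty product being the constant-1 function) satisfies |{i : f_S(i) = 1}| = 1. -/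
open scoped BigOperators

private lemma stmt13_key (n : ℕ) (𝓕 : Set (Fin n → ℤ))
    (hval : ∀ f ∈ 𝓕, ∀ i, f i = 0 ∨ f i = 1)
    (S : Finset (Fin n → ℤ)) (hS : ↑S ⊆ 𝓕) (i : Fin n) :
    (∏ f ∈ S, f i) = 1 ↔ ∀ f ∈ S, f i = 1 := by
  constructor
  · intro h f hf
    rcases hval f (hS hf) i with h0 | h1
    · exfalso
      have h2 : (∏ f ∈ S, f i) = 0 := Finset.prod_eq_zero hf h0
      rw [h2] at h; exact one_ne_zero h.symm
    · exact h1
  · exact Finset.prod_eq_one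

private lemma stmt13_aux (n : ℕ) (𝓕 : Set (Fin n → ℤ))
    (hval : ∀ f ∈ 𝓕, ∀ i, f i = 0 ∨ f i = 1)
    (hcompl : ∀ f ∈ 𝓕, (fun i => 1 - f i) ∈ 𝓕)
    (hsep : ∀ i j : Fin n, i ≠ j → ∃ f ∈ 𝓕, f i = 1 ∧ f j = 0) :
    ∀ m : ℕ, ∀ S : Finset (Fin n → ℤ), ↑S ⊆ 𝓕 →
      (Finset.univ.filter fun i : Fin n => (∏ f ∈ S, f i) = 1).card = m → 1 ≤ m →
      ∃ S' : Finset (Fin n → ℤ), ↑S' ⊆ 𝓕 ∧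
        2 ^ S'.card ≤ 2 ^ S.card * m ∧
        (Finset.univ.filter fun i : Fin n => (∏ f ∈ S', f i) = 1).card = 1 := by
  intro m
  induction m using Nat.strong_induction_on with
  | _ m ih =>
    intro S hS hcard hm
    set T := Finset.univ.filter fun i : Fin n => (∏ f ∈ S, f i) = 1 with hT
    rcases eq_or_lt_of_le hm with h1 | h2
    · exact ⟨S, hS, by rw [← h1, mul_one], hcard.trans h1.symm⟩
    -- m ≥ 2 : find two distinct points in T
    obtain ⟨i, hiT, j, hjT, hij⟩ := Finset.one_lt_card.mp (by omega : 1 < T.card)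
    obtain ⟨f, hf𝓕, hfi, hfj⟩ := hsep i j hij
    set g : Fin n → ℤ := fun i => 1 - f i with hg
    have hg𝓕 : g ∈ 𝓕 := hcompl f hf𝓕
    have hiT' : ∀ f' ∈ S, f' i = 1 := (stmt13_key n 𝓕 hval S hS i).mp (Finset.mem_filter.mp hiT).2
    have hjT' : ∀ f' ∈ S, f' j = 1 := (stmt13_key n 𝓕 hval S hS j).mp (Finset.mem_filter.mp hjT).2
    have hfS : f ∉ S := fun h => by have := hjT' f h; omega
    have hgS : g ∉ S := fun h => by have := hiT' g h; simp [hg, hfi] at this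
    have hSf : ↑(insert f S) ⊆ 𝓕 := by
      intro x hx
      rcases Finset.mem_insert.mp (by exact_mod_cast hx) with rfl | hx'
      · exact hf𝓕
      · exact hS hx'
    have hSg : ↑(insert g S) ⊆ 𝓕 := by
      intro x hx
      rcases Finset.mem_insert.mp (by exact_mod_cast hx) with rfl | hx'
      · exact hg𝓕
      · exact hS hx'
    set A := Finset.univ.filter fun i : Fin n => (∏ f' ∈ insert f S, f' i) = 1 with hA
    set B := Finset.univ.filter fun i : Fin n => (∏ f' ∈ insert g S, f' i) = 1 with hB
    have hmemA : ∀ k : Fin n, k ∈ A ↔ k ∈ T ∧ f k = 1 := by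
      intro k
      simp only [hA, hT, Finset.mem_filter, Finset.mem_univ, true_and]
      rw [stmt13_key n 𝓕 hval _ hSf, stmt13_key n 𝓕 hval S hS]
      constructor
      · intro h
        exact ⟨fun f' hf' => h f' (Finset.mem_insert_of_mem hf'), h f (Finset.mem_insert_self f S)⟩
      · rintro ⟨h1, h2⟩ f' hf'
        rcases Finset.mem_insert.mp hf' with rfl | hf'
        · exact h2
        · exact h1 f' hf'
    have hmemB : ∀ k : Fin n, k ∈ B ↔ k ∈ T ∧ f k = 0 := by
      intro k
      simp only [hB, hT, Finset.mem_filter, Finset.mem_univ, true_and]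
      rw [stmt13_key n 𝓕 hval _ hSg, stmt13_key n 𝓕 hval S hS]
      constructor
      · intro h
        have := h g (Finset.mem_insert_self g S)
        refine ⟨fun f' hf' => h f' (Finset.mem_insert_of_mem hf'), by simp [hg] at this; omega⟩
      · rintro ⟨h1, h2⟩ f' hf'
        rcases Finset.mem_insert.mp hf' with rfl | hf'
        · simp [hg, h2]
        · exact h1 f' hf'
    have hApB : A.card + B.card = m := by
      rw [← hcard]
      have : A = T.filter fun k => f k = 1 := by
        ext k; simp [hmemA k, Finset.mem_filter, and_comm]
      have hB' : B = T.filter fun k => ¬ f k = 1 := by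
        ext k
        simp only [hmemB k, Finset.mem_filter]
        constructor
        · rintro ⟨h1, h2⟩; exact ⟨h1, by omega⟩
        · rintro ⟨h1, h2⟩
          have := hval f hf𝓕 k
          exact ⟨h1, by omega⟩
      rw [this, hB']
      exact Finset.card_filter_add_card_filter_not _
    have hiA : i ∈ A := (hmemA i).mpr ⟨hiT, hfi⟩
    have hjB : j ∈ B := (hmemB j).mpr ⟨hjT, hfj⟩
    have hA1 : 1 ≤ A.card := Finset.card_pos.mpr ⟨i, hiA⟩
    have hB1 : 1 ≤ B.card := Finset.card_pos.mpr ⟨j, hjB⟩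
    rcases le_total A.card B.card with hle | hle
    · obtain ⟨S', hS'𝓕, hS'b, hS'c⟩ := ih A.card (by omega) (insert f S) hSf rfl hA1
      refine ⟨S', hS'𝓕, ?_, hS'c⟩
      have hcins : (insert f S).card = S.card + 1 := Finset.card_insert_of_notMem hfS
      rw [hcins] at hS'b
      calc 2 ^ S'.card ≤ 2 ^ (S.card + 1) * A.card := hS'b
        _ = 2 ^ S.card * (2 * A.card) := by ring
        _ ≤ 2 ^ S.card * m := Nat.mul_le_mul le_rfl (by
            calc 2 * A.card = A.card + A.card := two_mul _
              _ ≤ A.card + B.card := Nat.add_le_add_left hle _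
              _ = m := hApB)
    · obtain ⟨S', hS'𝓕, hS'b, hS'c⟩ := ih B.card (by omega) (insert g S) hSg rfl hB1
      refine ⟨S', hS'𝓕, ?_, hS'c⟩
      have hcins : (insert g S).card = S.card + 1 := Finset.card_insert_of_notMem hgS
      rw [hcins] at hS'b
      calc 2 ^ S'.card ≤ 2 ^ (S.card + 1) * B.card := hS'b
        _ = 2 ^ S.card * (2 * B.card) := by ring
        _ ≤ 2 ^ S.card * m := Nat.mul_le_mul le_rfl (by
            calc 2 * B.card = B.card + B.card := two_mul _
              _ ≤ A.card + B.card := Nat.add_le_add_right hle _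
              _ = m := hApB)

/-- given a family of `{0,1}`-valued functions on `{0,…,n-1}`
closed under `f ↦ 1 - f` and separating points, some subfamily of size at most
`log n` has pointwise product with support of size exactly 1. -/
theorem stmt13 (n : ℕ) (hn : 1 ≤ n) (𝓕 : Set (Fin n → ℤ))
    (hval : ∀ f ∈ 𝓕, ∀ i, f i = 0 ∨ f i = 1)
    (hcompl : ∀ f ∈ 𝓕, (fun i => 1 - f i) ∈ 𝓕)
    (hsep : ∀ i j : Fin n, i ≠ j → ∃ f ∈ 𝓕, f i = 1 ∧ f j = 0) :
    ∃ S : Finset (Fin n → ℤ), ↑S ⊆ 𝓕 ∧ (S.card : ℝ) ≤ Real.logb 2 n ∧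
      (Finset.univ.filter fun i : Fin n => (∏ f ∈ S, f i) = 1).card = 1 := by
  have hstart : (Finset.univ.filter fun i : Fin n => (∏ f ∈ (∅ : Finset (Fin n → ℤ)), f i) = 1).card = n := by
    simp
  obtain ⟨S', hS'𝓕, hS'b, hS'c⟩ := stmt13_aux n 𝓕 hval hcompl hsep n ∅ (by simp) hstart hn
  refine ⟨S', hS'𝓕, ?_, hS'c⟩
  simp only [Finset.card_empty, pow_zero, one_mul] at hS'b
  have h2n : (2 : ℝ) ^ S'.card ≤ (n : ℝ) := by exact_mod_cast hS'b
  rw [Real.le_logb_iff_rpow_le (by norm_num) (by exact_mod_cast hn)]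
  rw [Real.rpow_natCast]
  exact h2n
end

section
/- Let F be any field, let m ≥ 1, and let u : {0,…,m−1} → {0,1} be aperiodic. For j ∈ {0,…,m−1} let u_j = u ∘ τ_m^j, where τ_m is the cyclic shift on {0,…,m−1} (τ_m(i) = i+1 for i < m−1 and τ_m(m−1) = 0). Then for every function g : {0,…,m−1} → F there exists a polynomial P ∈ F[Y_0,…,Y_{m−1}] of total degree at most log m such that g(i) = P(u_0(i), u_1(i), …, u_{m−1}(i)) for all i ∈ {0,…,m−1} (identifying the Boolean values 0,1 with 0,1 ∈ F). -/
noncomputable section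

open scoped BigOperators

open MvPolynomial in
lemma interp_aux_s14 (F : Type) [Field F] (n : ℕ) :
    ∀ s : ℕ, ∀ S : Finset (Fin n → Bool), S.card ≤ s →
    ∀ g : (Fin n → Bool) → F,
    ∃ P : MvPolynomial (Fin n) F,
      P.totalDegree ≤ Nat.log 2 S.card ∧
      ∀ a ∈ S, MvPolynomial.eval (fun j => bF F (a j)) P = g a := by
  intro s
  induction s with
  | zero =>
    intro S hS g
    have : S = ∅ := Finset.card_eq_zero.mp (Nat.le_zero.mp hS)
    exact ⟨0, by simp, by simp [this]⟩
  | succ s ih =>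
    intro S hS g
    by_cases h1 : S.card ≤ 1
    · rcases Nat.le_one_iff_eq_zero_or_eq_one.mp h1 with h0 | h1
      · have : S = ∅ := Finset.card_eq_zero.mp h0
        exact ⟨0, by simp, by simp [this]⟩
      · obtain ⟨a, ha⟩ := Finset.card_eq_one.mp h1
        refine ⟨C (g a), by simp [h1], ?_⟩
        intro x hx
        rw [ha, Finset.mem_singleton] at hx
        subst hx; simp
    · push_neg at h1
      have h2 : 2 ≤ S.card := h1
      obtain ⟨x, hx, y, hy, hxy⟩ := Finset.one_lt_card.mp h1
      obtain ⟨i, hi⟩ := Function.ne_iff.mp hxy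
      have hne : ∀ c : Bool, (S.filter (fun a => a i = c)).Nonempty := by
        intro c
        by_cases hc : x i = c
        · exact ⟨x, Finset.mem_filter.mpr ⟨hx, hc⟩⟩
        · have : y i = c := by
            revert hi hc; cases x i <;> cases y i <;> cases c <;> simp
          exact ⟨y, Finset.mem_filter.mpr ⟨hy, this⟩⟩
      have hsum : (S.filter (fun a => a i = true)).card
          + (S.filter (fun a => a i = false)).card = S.card := by
        have := Finset.card_filter_add_card_filter_not (s := S) (p := fun a => a i = true)
        simpa using this
      suffices H : ∀ c : Bool,
          (S.filter (fun a => a i = c)).card + (S.filter (fun a => a i = !c)).card = S.card →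
          2 * (S.filter (fun a => a i = c)).card ≤ S.card →
          ∃ P : MvPolynomial (Fin n) F,
            P.totalDegree ≤ Nat.log 2 S.card ∧
            ∀ a ∈ S, MvPolynomial.eval (fun j => bF F (a j)) P = g a by
        rcases le_total (S.filter (fun a => a i = true)).card
            (S.filter (fun a => a i = false)).card with h | h
        · refine H true (by simpa using hsum) ?_
          calc 2 * (S.filter (fun a => a i = true)).card
              = (S.filter (fun a => a i = true)).card
                + (S.filter (fun a => a i = true)).card := two_mul _
            _ ≤ (S.filter (fun a => a i = true)).card
                + (S.filter (fun a => a i = false)).card := by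
                  exact Nat.add_le_add_left h _
            _ = S.card := hsum
        · refine H false (by simpa [Nat.add_comm] using hsum) ?_
          calc 2 * (S.filter (fun a => a i = false)).card
              = (S.filter (fun a => a i = false)).card
                + (S.filter (fun a => a i = false)).card := two_mul _
            _ ≤ (S.filter (fun a => a i = true)).card
                + (S.filter (fun a => a i = false)).card := by
                  exact Nat.add_le_add_right h _
            _ = S.card := hsum
      intro c hsum' hhalf
      have hsm1 : 1 ≤ (S.filter (fun a => a i = c)).card := Finset.card_pos.mpr (hne c)
      have hbg1 : 1 ≤ (S.filter (fun a => a i = !c)).card := Finset.card_pos.mpr (hne (!c))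
      clear hsum hne hi hxy hx hy h1
      set Ssm := S.filter (fun a => a i = c) with hSsm
      set Sbig := S.filter (fun a => a i = !c) with hSbig
      have hbs : Sbig.card ≤ s := by omega
      have hss : Ssm.card ≤ s := by omega
      obtain ⟨P₁, hP₁d, hP₁⟩ := ih Sbig hbs g
      obtain ⟨Q, hQd, hQ⟩ := ih Ssm hss
        (fun a => g a - MvPolynomial.eval (fun j => bF F (a j)) P₁)
      set L : MvPolynomial (Fin n) F := if c then X i else 1 - X i with hL
      have hLdeg : L.totalDegree ≤ 1 := by
        rw [hL]; cases c
        · simp only [if_neg Bool.false_ne_true]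
          calc (1 - X i : MvPolynomial (Fin n) F).totalDegree
              ≤ max (1 : MvPolynomial (Fin n) F).totalDegree
                  ((-(X i) : MvPolynomial (Fin n) F)).totalDegree := by
                rw [sub_eq_add_neg]
                exact MvPolynomial.totalDegree_add _ _
            _ ≤ 1 := by simp [MvPolynomial.totalDegree_neg, MvPolynomial.totalDegree_X]
        · simp [MvPolynomial.totalDegree_X]
      have hLev : ∀ a : Fin n → Bool,
          MvPolynomial.eval (fun j => bF F (a j)) L = if a i = c then 1 else 0 := by
        intro a
        rw [hL]; cases c <;> cases ha : a i <;> simp [bF, ha]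
      refine ⟨P₁ + L * Q, ?_, ?_⟩
      · have hlogbig : Nat.log 2 Sbig.card ≤ Nat.log 2 S.card :=
          Nat.log_mono_right (by omega)
        have hdivle : Ssm.card ≤ S.card / 2 :=
          (Nat.le_div_iff_mul_le (by norm_num)).mpr (by omega)
        have hlogsm : Nat.log 2 Ssm.card ≤ Nat.log 2 (S.card / 2) :=
          Nat.log_mono_right hdivle
        have hdb : Nat.log 2 (S.card / 2) = Nat.log 2 S.card - 1 := Nat.log_div_base 2 S.card
        have hpos : 0 < Nat.log 2 S.card := Nat.log_pos (by norm_num) h2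
        calc (P₁ + L * Q).totalDegree
            ≤ max P₁.totalDegree (L * Q).totalDegree := MvPolynomial.totalDegree_add _ _
          _ ≤ max P₁.totalDegree (L.totalDegree + Q.totalDegree) :=
              max_le_max le_rfl (MvPolynomial.totalDegree_mul _ _)
          _ ≤ Nat.log 2 S.card := by
              apply max_le
              · omega
              · omega
      · intro a ha
        have hmem : a i = c ∨ a i = !c := by cases ha' : a i <;> cases c <;> simp
        rcases hmem with hc | hc
        · have haS : a ∈ Ssm := Finset.mem_filter.mpr ⟨ha, hc⟩
          simp only [map_add, map_mul, hLev a, if_pos hc, one_mul, hQ a haS]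
          ring
        · have haS : a ∈ Sbig := Finset.mem_filter.mpr ⟨ha, hc⟩
          have hnc : a i ≠ c := by rw [hc]; cases c <;> simp
          simp only [map_add, map_mul, hLev a, if_neg hnc, zero_mul, add_zero, hP₁ a haS]

/-- if `u : [0,m-1] → {0,1}` is aperiodic under cyclic shifts,
then every `g : [0,m-1] → F` can be written as a polynomial of total degree at
most `log m` in the cyclic shifts of `u`. -/
theorem stmt14 (F : Type) [Field F] (m : ℕ) (hm : 1 ≤ m)
    (u : ℕ → Bool)
    (hap : ∀ j, 0 < j → j < m → ¬ (∀ i < m, u ((i + j) % m) = u i))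
    (g : ℕ → F) :
    ∃ P : MvPolynomial (Fin m) F,
      (P.totalDegree : ℝ) ≤ Real.logb 2 m ∧
      ∀ i < m,
        MvPolynomial.eval (fun j : Fin m => bF F (u ((i + (j:ℕ)) % m))) P = g i := by
  classical
  set v : ℕ → (Fin m → Bool) := fun i j => u ((i + (j : ℕ)) % m) with hv
  -- injectivity from aperiodicity
  have hkey : ∀ i i', i < i' → i' < m → v i ≠ v i' := by
    intro i i' hii' hi'm hvv
    have hd : 0 < i' - i := by omega
    have hdm : i' - i < m := by omega
    refine hap (i' - i) hd hdm ?_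
    intro k hk
    set j : ℕ := (k + m - i) % m with hj
    have hjm : j < m := Nat.mod_lt _ (by omega)
    have h1 : (i + j) % m = k := by
      rw [hj, Nat.add_mod_mod]
      have : i + (k + m - i) = k + m := by omega
      rw [this, Nat.add_mod_right, Nat.mod_eq_of_lt hk]
    have h2 : (i' + j) % m = (k + (i' - i)) % m := by
      rw [hj, Nat.add_mod_mod]
      have : i' + (k + m - i) = (k + (i' - i)) + m := by omega
      rw [this, Nat.add_mod_right]
    have := congrFun hvv (⟨j, hjm⟩ : Fin m)
    simp only [hv] at this
    rw [h1, h2] at this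
    exact this.symm
  have hinj : Set.InjOn v (Finset.range m) := by
    intro a ha b hb hab
    simp only [Finset.coe_range, Set.mem_Iio] at ha hb
    rcases lt_trichotomy a b with h | h | h
    · exact absurd hab (hkey a b h hb)
    · exact h
    · exact absurd hab.symm (hkey b a h ha)
  set S : Finset (Fin m → Bool) := (Finset.range m).image v with hS
  have hcard : S.card = m := by
    rw [hS, Finset.card_image_of_injOn hinj, Finset.card_range]
  set gg : (Fin m → Bool) → F := fun a =>
    if h : ∃ i, i < m ∧ v i = a then g h.choose else 0 with hgg
  obtain ⟨P, hPd, hPe⟩ := interp_aux_s14 F m S.card S le_rfl gg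
  refine ⟨P, ?_, ?_⟩
  · have h1 : (P.totalDegree : ℝ) ≤ (Nat.log 2 m : ℝ) := by
      exact_mod_cast hcard ▸ hPd
    refine h1.trans ?_
    rw [Real.le_logb_iff_rpow_le (by norm_num) (by exact_mod_cast hm)]
    rw [Real.rpow_natCast]
    exact_mod_cast Nat.pow_log_le_self 2 (by omega)
  · intro i him
    have hiS : v i ∈ S := Finset.mem_image_of_mem v (Finset.mem_range.mpr him)
    have := hPe (v i) hiS
    have hg : gg (v i) = g i := by
      rw [hgg]
      have hex : ∃ i', i' < m ∧ v i' = v i := ⟨i, him, rfl⟩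
      beta_reduce
      rw [dif_pos hex]
      have hch := hex.choose_spec
      have : hex.choose = i := by
        have h1 : (hex.choose : ℕ) ∈ (Finset.range m : Set ℕ) := by
          simp [hch.1]
        have h2 : (i : ℕ) ∈ (Finset.range m : Set ℕ) := by simp [him]
        exact hinj h1 h2 hch.2
      rw [this]
    rw [← hg]
    exact this
end
end

section
/- There is a constant c > 0 such that for every field F, every positive integer m, and every ε ∈ [2^{−m}, 1/3], pdeg^F_ε(OR_m) ≥ c·log(1/ε). -/
noncomputable section

open scoped BigOperators

lemma sum_eval_indicator {F : Type} [Field F] {m : ℕ} (K : Finset (Fin m))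
    (Q : MvPolynomial (Fin m) F) (hQ : Q.totalDegree < K.card) :
    ∑ S ∈ K.powerset, (-1:F)^S.card *
      MvPolynomial.eval (fun i => if i ∈ S then (1:F) else 0) Q = 0 := by
  classical
  have hprod : ∀ (S : Finset (Fin m)) (d : Fin m →₀ ℕ),
      (∏ i ∈ d.support, (if i ∈ S then (1:F) else 0) ^ d i)
        = if d.support ⊆ S then 1 else 0 := by
    intro S d
    rw [show (∏ i ∈ d.support, (if i ∈ S then (1:F) else 0) ^ d i)
        = ∏ i ∈ d.support, (if i ∈ S then (1:F) else 0) from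
      Finset.prod_congr rfl (fun i hi => by
        have : d i ≠ 0 := Finsupp.mem_support_iff.mp hi
        split <;> simp [this])]
    rw [Finset.prod_boole]
    congr 1
  calc ∑ S ∈ K.powerset, (-1:F)^S.card *
        MvPolynomial.eval (fun i => if i ∈ S then (1:F) else 0) Q
      = ∑ S ∈ K.powerset, ∑ d ∈ Q.support,
          Q.coeff d * ((-1:F)^S.card * if d.support ⊆ S then 1 else 0) := by
        refine Finset.sum_congr rfl fun S _ => ?_
        rw [MvPolynomial.eval_eq, Finset.mul_sum]
        refine Finset.sum_congr rfl fun d _ => ?_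
        rw [hprod]; ring
    _ = ∑ d ∈ Q.support, ∑ S ∈ K.powerset,
          Q.coeff d * ((-1:F)^S.card * if d.support ⊆ S then 1 else 0) :=
        Finset.sum_comm
    _ = 0 := by
        refine Finset.sum_eq_zero fun d hd => ?_
        rw [← Finset.mul_sum]
        rcases Classical.em (d.support ⊆ K) with hTK | hTK
        · have hTcard : d.support.card < K.card := by
            have h1 : d.support.card ≤ d.sum fun _ e => e := by
              rw [Finsupp.sum, Finset.card_eq_sum_ones]
              exact Finset.sum_le_sum fun i hi =>
                Nat.one_le_iff_ne_zero.mpr (Finsupp.mem_support_iff.mp hi)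
            exact lt_of_le_of_lt (h1.trans (MvPolynomial.le_totalDegree hd)) hQ
          have hKT : (K \ d.support).Nonempty := by
            rw [← Finset.card_pos, Finset.card_sdiff_of_subset hTK]
            omega
          have hbij : ∑ S ∈ K.powerset, ((-1:F)^S.card * if d.support ⊆ S then 1 else 0)
              = ∑ S' ∈ (K \ d.support).powerset, (-1:F)^(S' ∪ d.support).card := by
            rw [show ∑ S ∈ K.powerset, ((-1:F)^S.card * if d.support ⊆ S then 1 else 0)
                = ∑ S ∈ K.powerset.filter (fun S => d.support ⊆ S), (-1:F)^S.card by
              rw [Finset.sum_filter]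
              exact Finset.sum_congr rfl fun S _ => by split <;> simp]
            refine Finset.sum_bij' (fun S _ => S \ d.support) (fun S' _ => S' ∪ d.support)
              (fun S hS => ?_) (fun S' hS' => ?_) (fun S hS => ?_) (fun S' hS' => ?_)
              (fun S hS => ?_)
            · rw [Finset.mem_filter, Finset.mem_powerset] at hS
              rw [Finset.mem_powerset]
              exact Finset.sdiff_subset_sdiff hS.1 le_rfl
            · rw [Finset.mem_powerset] at hS'
              rw [Finset.mem_filter, Finset.mem_powerset]
              exact ⟨Finset.union_subset (hS'.trans Finset.sdiff_subset)
                (fun x hx => hTK hx), Finset.subset_union_right⟩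
            · rw [Finset.mem_filter] at hS
              exact Finset.sdiff_union_of_subset hS.2
            · rw [Finset.mem_powerset] at hS'
              show (S' ∪ d.support) \ d.support = S'
              rw [Finset.union_sdiff_right]
              exact Finset.sdiff_eq_self_of_disjoint
                (Finset.disjoint_of_subset_left hS' Finset.sdiff_disjoint)
            · rw [Finset.mem_filter] at hS
              show ((-1:F)^S.card) = (-1:F)^((S \ d.support) ∪ d.support).card
              rw [Finset.sdiff_union_of_subset hS.2]
          rw [hbij]
          have hsum : ∑ S' ∈ (K \ d.support).powerset, (-1:F)^(S' ∪ d.support).card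
              = (-1:F)^d.support.card *
                ∑ S' ∈ (K \ d.support).powerset, (-1:F)^S'.card := by
            rw [Finset.mul_sum]
            refine Finset.sum_congr rfl fun S' hS' => ?_
            rw [Finset.mem_powerset] at hS'
            have hdisj : Disjoint S' d.support :=
              Finset.disjoint_of_subset_left hS' Finset.sdiff_disjoint
            rw [Finset.card_union_of_disjoint hdisj, pow_add]
            ring
          have hz : ∑ S' ∈ (K \ d.support).powerset, (-1:F)^S'.card = 0 := by
            have := Finset.sum_powerset_neg_one_pow_card_of_nonempty hKT
            calc ∑ S' ∈ (K \ d.support).powerset, (-1:F)^S'.card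
                = ((∑ S' ∈ (K \ d.support).powerset, (-1:ℤ)^S'.card : ℤ) : F) := by
                  push_cast; rfl
              _ = 0 := by rw [this]; simp
          rw [hsum, hz, mul_zero, mul_zero]
        · have : ∀ S ∈ K.powerset, ((-1:F)^S.card * if d.support ⊆ S then 1 else 0) = 0 := by
            intro S hS
            rw [Finset.mem_powerset] at hS
            rw [if_neg (fun h => hTK (h.trans hS)), mul_zero]
          rw [Finset.sum_congr rfl this, Finset.sum_const_zero, mul_zero]


lemma exact_OR (F : Type) [Field F] (m : ℕ) :
    ∃ P : ProbPoly F m, (∀ i, (P.poly i).totalDegree ≤ m) ∧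
      ∀ a, errAt P (fun a : Fin m → Bool => decide (1 ≤ wt a)) a = 0 := by
  classical
  refine ⟨⟨1, fun _ => 1, fun _ => zero_le_one, by simp,
    fun _ => 1 - ∏ i, (1 - MvPolynomial.X i)⟩, ?_, ?_⟩
  · intro _
    refine le_trans (MvPolynomial.totalDegree_sub _ _) (max_le (by simp) ?_)
    refine le_trans (MvPolynomial.totalDegree_finset_prod _ _) ?_
    calc ∑ i : Fin m, (1 - MvPolynomial.X (R := F) i).totalDegree
        ≤ ∑ _i : Fin m, 1 := Finset.sum_le_sum fun i _ =>
          le_trans (MvPolynomial.totalDegree_sub _ _)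
            (max_le (by simp) (le_trans (MvPolynomial.totalDegree_X i).le le_rfl))
      _ = m := by simp
  · intro a
    have heval : MvPolynomial.eval (fun v => bF F (a v)) (1 - ∏ i, (1 - MvPolynomial.X i))
        = bF F (decide (1 ≤ wt a)) := by
      rw [map_sub, map_one, map_prod]
      simp only [map_sub, map_one, MvPolynomial.eval_X]
      by_cases h : ∃ i, a i = true
      · obtain ⟨i, hi⟩ := h
        rw [Finset.prod_eq_zero (Finset.mem_univ i) (by simp [bF, hi])]
        have hwt : 1 ≤ wt a := Finset.card_pos.mpr
          ⟨i, Finset.mem_filter.mpr ⟨Finset.mem_univ i, hi⟩⟩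
        simp [bF, hwt]
      · push_neg at h
        have hall : ∀ i, a i = false := fun i => Bool.eq_false_iff.mpr (h i)
        rw [Finset.prod_eq_one (fun i _ => by simp [bF, hall i])]
        have hwt : wt a = 0 := by
          rw [wt, Finset.card_eq_zero, Finset.filter_eq_empty_iff]
          intro i _
          simp [hall i]
        simp [bF, hwt]
    unfold errAt
    refine Finset.sum_eq_zero fun i _ => ?_
    simp only [heval, if_pos]

lemma or_disagree {F : Type} [Field F] {m : ℕ} (K : Finset (Fin m))
    (Q : MvPolynomial (Fin m) F) (hQ : Q.totalDegree < K.card) (hK : K.Nonempty) :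
    ∃ S ∈ K.powerset, MvPolynomial.eval (fun v => bF F (decide (v ∈ S))) Q
      ≠ bF F (decide (1 ≤ wt (fun v => decide (v ∈ S)))) := by
  classical
  by_contra hcon
  push_neg at hcon
  have hfun : ∀ S : Finset (Fin m),
      (fun v => bF F (decide (v ∈ S))) = (fun i => if i ∈ S then (1:F) else 0) := by
    intro S; funext v; simp [bF]
  have hwt : ∀ S : Finset (Fin m), wt (fun v => decide (v ∈ S)) = S.card := by
    intro S; rw [wt]; congr 1; ext v; simp
  have h0 := sum_eval_indicator K Q hQ
  have h1 : ∑ S ∈ K.powerset, (-1:F)^S.card *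
      MvPolynomial.eval (fun i => if i ∈ S then (1:F) else 0) Q
      = ∑ S ∈ K.powerset, (-1:F)^S.card * (if S = ∅ then 0 else 1) := by
    refine Finset.sum_congr rfl fun S hS => ?_
    rw [← hfun S, hcon S hS]
    congr 1
    by_cases h : S = ∅
    · subst h; simp [bF, wt]
    · have h1 : 1 ≤ S.card := Finset.card_pos.mpr (Finset.nonempty_iff_ne_empty.mpr h)
      rw [hwt S] at *
      simp [bF, h, hwt S, h1]
  have h2 : ∑ S ∈ K.powerset, (-1:F)^S.card * (if S = ∅ then 0 else 1) = -1 := by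
    have hsplit : ∀ S : Finset (Fin m), (-1:F)^S.card * (if S = ∅ then 0 else 1)
        = (-1:F)^S.card - (if S = ∅ then 1 else 0) := by
      intro S; by_cases h : S = ∅ <;> simp [h]
    rw [Finset.sum_congr rfl fun S _ => hsplit S, Finset.sum_sub_distrib]
    have hz : ∑ S ∈ K.powerset, (-1:F)^S.card = 0 := by
      have h := Finset.sum_powerset_neg_one_pow_card_of_nonempty hK
      calc ∑ S ∈ K.powerset, (-1:F)^S.card
          = ((∑ S ∈ K.powerset, (-1:ℤ)^S.card : ℤ) : F) := by push_cast; rfl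
        _ = 0 := by rw [h]; simp
    have he : ∑ S ∈ K.powerset, (if S = ∅ then (1:F) else 0) = 1 := by
      rw [Finset.sum_ite_eq' K.powerset ∅ (fun _ => (1:F))]
      simp
    rw [hz, he]; ring
  rw [h1, h2] at h0
  exact one_ne_zero (neg_eq_zero.mp h0)

lemma key_bound {F : Type} [Field F] {m d : ℕ} (P : ProbPoly F m)
    (hdeg : ∀ i, (P.poly i).totalDegree ≤ d) {ε : ℝ}
    (herr : ∀ a, errAt P (fun a : Fin m → Bool => decide (1 ≤ wt a)) a ≤ ε)
    (hdm : d < m) : 1 ≤ 2^(d+1) * ε := by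
  classical
  obtain ⟨K, -, hKcard⟩ := Finset.exists_subset_card_eq
    (s := (Finset.univ : Finset (Fin m))) (n := d+1) (by simpa using hdm)
  have hKne : K.Nonempty := Finset.card_pos.mp (by rw [hKcard]; omega)
  have hone : (1:ℝ) ≤ ∑ S ∈ K.powerset,
      errAt P (fun a : Fin m → Bool => decide (1 ≤ wt a)) (fun v => decide (v ∈ S)) := by
    have hstep : ∀ i, P.w i ≤ ∑ S ∈ K.powerset,
        (if MvPolynomial.eval (fun v => bF F (decide (v ∈ S))) (P.poly i)
           = bF F (decide (1 ≤ wt (fun v => decide (v ∈ S)))) then (0:ℝ) else P.w i) := by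
      intro i
      obtain ⟨S0, hS0, hne⟩ := or_disagree K (P.poly i)
        (lt_of_le_of_lt (hdeg i) (by rw [hKcard]; omega)) hKne
      have hterm : (if MvPolynomial.eval (fun v => bF F (decide (v ∈ S0))) (P.poly i)
          = bF F (decide (1 ≤ wt (fun v => decide (v ∈ S0)))) then (0:ℝ) else P.w i)
          = P.w i := if_neg hne
      have hles := Finset.single_le_sum (f := fun S =>
        if MvPolynomial.eval (fun v => bF F (decide (v ∈ S))) (P.poly i)
          = bF F (decide (1 ≤ wt (fun v => decide (v ∈ S)))) then (0:ℝ) else P.w i)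
        (fun S _ => by
          by_cases h : MvPolynomial.eval (fun v => bF F (decide (v ∈ S))) (P.poly i)
              = bF F (decide (1 ≤ wt (fun v => decide (v ∈ S))))
          · simp [h]
          · simp [h, P.w_nonneg i]) hS0
      rw [hterm] at hles
      exact hles
    calc (1:ℝ) = ∑ i, P.w i := P.w_sum.symm
      _ ≤ ∑ i, ∑ S ∈ K.powerset,
          (if MvPolynomial.eval (fun v => bF F (decide (v ∈ S))) (P.poly i)
             = bF F (decide (1 ≤ wt (fun v => decide (v ∈ S)))) then (0:ℝ) else P.w i) :=
          Finset.sum_le_sum fun i _ => hstep i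
      _ = ∑ S ∈ K.powerset, ∑ i,
          (if MvPolynomial.eval (fun v => bF F (decide (v ∈ S))) (P.poly i)
             = bF F (decide (1 ≤ wt (fun v => decide (v ∈ S)))) then (0:ℝ) else P.w i) :=
          Finset.sum_comm
      _ = ∑ S ∈ K.powerset,
          errAt P (fun a : Fin m → Bool => decide (1 ≤ wt a)) (fun v => decide (v ∈ S)) := by
          refine Finset.sum_congr rfl fun S _ => ?_
          rw [errAt]
  have htwo : ∑ S ∈ K.powerset,
      errAt P (fun a : Fin m → Bool => decide (1 ≤ wt a)) (fun v => decide (v ∈ S))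
      ≤ 2^(d+1) * ε := by
    calc ∑ S ∈ K.powerset,
        errAt P (fun a : Fin m → Bool => decide (1 ≤ wt a)) (fun v => decide (v ∈ S))
        ≤ ∑ _S ∈ K.powerset, ε := Finset.sum_le_sum fun S _ => herr _
      _ = (K.powerset.card : ℝ) * ε := by rw [Finset.sum_const, nsmul_eq_mul]
      _ = 2^(d+1) * ε := by rw [Finset.card_powerset, hKcard]; push_cast; ring
  linarith

/-- lower bound `Ω(log(1/ε))` for `OR_m`. -/
theorem stmt17 :
    ∃ c : ℝ, 0 < c ∧
      ∀ (F : Type) [Field F] (m : ℕ), 1 ≤ m →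
        ∀ ε : ℝ, 1 / (2:ℝ)^m ≤ ε → ε ≤ 1/3 →
          c * Real.logb 2 (1/ε)
            ≤ (pdeg F (fun a : Fin m → Bool => decide (1 ≤ wt a)) ε : ℝ) := by
  have hlb : (1:ℝ) < Real.logb 2 3 := by
    have h := Real.logb_lt_logb (b := 2) one_lt_two
      (by norm_num : (0:ℝ) < 2) (by norm_num : (2:ℝ) < 3)
    rwa [Real.logb_self_eq_one one_lt_two] at h
  have hlbpos : (0:ℝ) < Real.logb 2 3 := by linarith
  refine ⟨1 - 1 / Real.logb 2 3, ?_, ?_⟩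
  · have h : 1 / Real.logb 2 3 < 1 := by rw [div_lt_one hlbpos]; exact hlb
    linarith
  · intro F _ m hm ε hε1 hε2
    have hε0 : 0 < ε := lt_of_lt_of_le (by positivity) hε1
    have h3 : (3:ℝ) ≤ 1/ε := by rw [le_div_iff₀ hε0]; linarith
    have h3L : Real.logb 2 3 ≤ Real.logb 2 (1/ε) :=
      Real.logb_le_logb_of_le one_lt_two (by norm_num) h3
    have hLpos : 0 < Real.logb 2 (1/ε) := lt_of_lt_of_le hlbpos h3L
    have hne : ∃ P : ProbPoly F m, (∀ i, (P.poly i).totalDegree ≤ m) ∧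
        ∀ a, errAt P (fun a : Fin m → Bool => decide (1 ≤ wt a)) a ≤ ε := by
      obtain ⟨P, h1, h2⟩ := exact_OR F m
      exact ⟨P, h1, fun a => by rw [h2 a]; positivity⟩
    have hmem := Nat.sInf_mem (s := {d | ∃ P : ProbPoly F m,
        (∀ i, (P.poly i).totalDegree ≤ d) ∧
        ∀ a, errAt P (fun a : Fin m → Bool => decide (1 ≤ wt a)) a ≤ ε}) ⟨m, hne⟩
    rw [show sInf {d | ∃ P : ProbPoly F m, (∀ i, (P.poly i).totalDegree ≤ d) ∧
        ∀ a, errAt P (fun a : Fin m → Bool => decide (1 ≤ wt a)) a ≤ ε}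
        = pdeg F (fun a : Fin m → Bool => decide (1 ≤ wt a)) ε from rfl] at hmem
    obtain ⟨P, hdeg, herr⟩ := hmem
    set d := pdeg F (fun a : Fin m → Bool => decide (1 ≤ wt a)) ε with hd
    have hlogpow : ∀ k : ℕ, Real.logb 2 ((2:ℝ)^k) = k := by
      intro k
      rw [Real.logb_pow, Real.logb_self_eq_one one_lt_two, mul_one]
    rcases lt_or_ge d m with hdm | hdm
    · have hk := key_bound P hdeg herr hdm
      have hinv : 1/ε ≤ (2:ℝ)^(d+1) := by rw [div_le_iff₀ hε0]; linarith
      have hLd : Real.logb 2 (1/ε) ≤ (d:ℝ)+1 := by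
        have h := Real.logb_le_logb_of_le one_lt_two (by positivity) hinv
        rw [hlogpow (d+1)] at h
        push_cast at h
        linarith
      have hdiv : 1 ≤ Real.logb 2 (1/ε) / Real.logb 2 3 :=
        (one_le_div hlbpos).mpr h3L
      have hcalc : (1 - 1/Real.logb 2 3) * Real.logb 2 (1/ε)
          = Real.logb 2 (1/ε) - Real.logb 2 (1/ε) / Real.logb 2 3 := by
        field_simp
      rw [hcalc]
      linarith
    · have hinv : 1/ε ≤ (2:ℝ)^m := by
        rw [div_le_iff₀ hε0]
        rw [div_le_iff₀ (by positivity : (0:ℝ) < (2:ℝ)^m)] at hε1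
        linarith
      have hLm : Real.logb 2 (1/ε) ≤ (m:ℝ) := by
        have h := Real.logb_le_logb_of_le one_lt_two (by positivity) hinv
        rwa [hlogpow m] at h
      have hc1 : (1 - 1/Real.logb 2 3) ≤ 1 := by
        have : 0 < 1/Real.logb 2 3 := by positivity
        linarith
      have hmd : (m:ℝ) ≤ (d:ℝ) := by exact_mod_cast hdm
      calc (1 - 1/Real.logb 2 3) * Real.logb 2 (1/ε)
          ≤ 1 * Real.logb 2 (1/ε) := mul_le_mul_of_nonneg_right hc1 hLpos.le
        _ = Real.logb 2 (1/ε) := one_mul _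
        _ ≤ (d:ℝ) := le_trans hLm hmd
end
end
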